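/- Let A be a locally-complex algebra of dimension n > 2. Then l(A) ≤ F_{n−1}, the (n−1)-th Fibonacci number (F_1 = F_2 = 1). -/
import Mathlib


/-- Words in a finite subset `S` of a (not necessarily associative) unital algebra:
`IsWord S n a` means `a` is a product (with some bracketing) of `n` elements of `S`,
where `1` is the unique word of length `0`. -/
inductive IsWord {A : Type*} [NonAssocRing A] (S : Set A) : ℕ → A → Prop
  | one : IsWord S 0 1
  | base : ∀ a, a ∈ S → IsWord S 1 a
  | mul : ∀ {m n : ℕ} {a b : A}, 0 < m → 0 < n → IsWord S m a → IsWord S n b →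
      IsWord S (m + n) (a * b)

/-- `Lspan F S k` is the `F`-linear span of all words in `S` of length at most `k`. -/
def Lspan (F : Type*) {A : Type*} [Field F] [NonAssocRing A] [Module F A]
    (S : Set A) (k : ℕ) : Submodule F A :=
  Submodule.span F {a | ∃ m ≤ k, IsWord S m a}

/-- `S` generates the algebra `A` iff the union of all the `Lspan F S k` is all of `A`. -/
def Generates (F : Type*) {A : Type*} [Field F] [NonAssocRing A] [Module F A]
    (S : Set A) : Prop :=
  (⨆ k, Lspan F S k) = ⊤

/-- The length of a generating set: the least `k` with `Lspan F S k = ⊤`. -/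
noncomputable def len (F : Type*) {A : Type*} [Field F] [NonAssocRing A] [Module F A]
    (S : Set A) : ℕ :=
  sInf {k | Lspan F S k = ⊤}

/-- The length of the algebra: the maximum of `len F S` over all finite generating sets. -/
noncomputable def algLen (F : Type*) (A : Type*) [Field F] [NonAssocRing A] [Module F A] : ℕ :=
  sSup {l | ∃ S : Set A, S.Finite ∧ Generates F S ∧ len F S = l}

/-- `w` is a fresh word of length `n` in `S`: a word of length `n` lying in no `Lspan F S m`
for `m < n`. -/
def Fresh (F : Type*) {A : Type*} [Field F] [NonAssocRing A] [Module F A]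
    (S : Set A) (n : ℕ) (w : A) : Prop :=
  IsWord S n w ∧ ∀ m < n, w ∉ Lspan F S m

/-- `(m 0, m 1, …, m N)` is the characteristic sequence of `S`: a non-decreasing sequence
with `m 0 = 0` in which each `k ≥ 1` occurs exactly
`dim Lspan F S k − dim Lspan F S (k-1)` times. -/
def IsCharSeq (F : Type*) {A : Type*} [Field F] [NonAssocRing A] [Module F A]
    (S : Set A) (N : ℕ) (m : ℕ → ℕ) : Prop :=
  m 0 = 0 ∧ (∀ i j, i ≤ j → j ≤ N → m i ≤ m j) ∧
  (∀ t, 1 ≤ t → t ≤ N → 1 ≤ m t) ∧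
  ∀ k, 1 ≤ k →
    ((Finset.range (N + 1)).filter (fun t => m t = k)).card
      = Module.finrank F (Lspan F S k) - Module.finrank F (Lspan F S (k - 1))

section Dev
set_option linter.unusedSectionVars false
set_option linter.unusedVariables false
variable {A : Type*} [NonAssocRing A] [Module ℝ A] [SMulCommClass ℝ A A] [IsScalarTower ℝ A A]
  {S : Set A}

lemma isWord_zero_aux {k : ℕ} {a : A} (h : IsWord S k a) : k = 0 → a = 1 := by
  induction h with
  | one => intro; rfl
  | base a ha => omega
  | mul hm hn _ _ _ _ => omega

lemma isWord_zero {a : A} (h : IsWord S 0 a) : a = 1 := isWord_zero_aux h rfl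

lemma isWord_decomp {k : ℕ} {w : A} (h : IsWord S k w) (hk : 2 ≤ k) :
    ∃ i j u v, 0 < i ∧ 0 < j ∧ i + j = k ∧ IsWord S i u ∧ IsWord S j v ∧ w = u * v := by
  cases h with
  | one => omega
  | base a ha => omega
  | mul hm hn hu hv => exact ⟨_, _, _, _, hm, hn, rfl, hu, hv, rfl⟩

lemma lspan_mono {i j : ℕ} (h : i ≤ j) : Lspan ℝ S i ≤ Lspan ℝ S j :=
  Submodule.span_mono (fun a ⟨m, hm, hw⟩ => ⟨m, le_trans hm h, hw⟩)

lemma word_mem_lspan {m k : ℕ} {a : A} (h : IsWord S m a) (hm : m ≤ k) :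
    a ∈ Lspan ℝ S k :=
  Submodule.subset_span ⟨m, hm, h⟩

lemma one_mem_lspan (k : ℕ) : (1 : A) ∈ Lspan ℝ S k :=
  word_mem_lspan IsWord.one (Nat.zero_le _)

lemma mul_span_le {i j : ℕ} {M : Submodule ℝ A}
    (h : ∀ m m' (u v : A), m ≤ i → m' ≤ j → IsWord S m u → IsWord S m' v → u * v ∈ M)
    {a b : A} (ha : a ∈ Lspan ℝ S i) (hb : b ∈ Lspan ℝ S j) : a * b ∈ M := by
  have step1 : ∀ u : A, (∃ m ≤ i, IsWord S m u) → u * b ∈ M := by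
    rintro u ⟨m, hm, hu⟩
    have hle : Lspan ℝ S j ≤ M.comap (LinearMap.mulLeft ℝ u) := by
      rw [Lspan, Submodule.span_le]
      rintro v ⟨m', hm', hv⟩
      exact h m m' u v hm hm' hu hv
    exact hle hb
  have hle : Lspan ℝ S i ≤ M.comap (LinearMap.mulRight ℝ b) := by
    rw [Lspan, Submodule.span_le]
    rintro u ⟨m, hm, hu⟩
    exact step1 u ⟨m, hm, hu⟩
  exact hle ha

lemma mul_mem_lspan {i j : ℕ} {a b : A} (ha : a ∈ Lspan ℝ S i) (hb : b ∈ Lspan ℝ S j) :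
    a * b ∈ Lspan ℝ S (i + j) := by
  refine mul_span_le (fun m m' u v hm hm' hu hv => ?_) ha hb
  rcases Nat.eq_zero_or_pos m with rfl | hmpos
  · rw [isWord_zero hu, one_mul]
    exact word_mem_lspan hv (by omega)
  rcases Nat.eq_zero_or_pos m' with rfl | hm'pos
  · rw [isWord_zero hv, mul_one]
    exact word_mem_lspan hu (by omega)
  exact word_mem_lspan (IsWord.mul hmpos hm'pos hu hv) (by omega)

lemma dim_L1 [FiniteDimensional ℝ A]
    (hquad : ∀ a : A, ∃ u v : ℝ, a * a = u • (1:A) + v • a)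
    (hgen : (⨆ k, Lspan ℝ S k) = ⊤) (hn : 2 < Module.finrank ℝ A) :
    3 ≤ Module.finrank ℝ (Lspan ℝ S 1) := by
  by_contra hcon
  push_neg at hcon
  have hone : (1:A) ∈ Lspan ℝ S 1 := one_mem_lspan 1
  haveI : Nontrivial A := (Module.finrank_pos_iff (R := ℝ)).mp (by omega)
  have hmul : ∀ a ∈ Lspan ℝ S 1, ∀ b ∈ Lspan ℝ S 1, a * b ∈ Lspan ℝ S 1 := by
    by_cases hsub : Lspan ℝ S 1 ≤ Submodule.span ℝ {(1:A)}
    · intro a ha b hb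
      obtain ⟨r, hr⟩ := Submodule.mem_span_singleton.mp (hsub ha)
      obtain ⟨r', hr'⟩ := Submodule.mem_span_singleton.mp (hsub hb)
      rw [← hr, ← hr', smul_mul_assoc, mul_smul_comm, one_mul]
      exact Submodule.smul_mem _ _ (Submodule.smul_mem _ _ hone)
    · rw [SetLike.not_le_iff_exists] at hsub
      obtain ⟨a₀, ha₀L, ha₀⟩ := hsub
      set N := Submodule.span ℝ {(1:A)} ⊔ Submodule.span ℝ {a₀} with hNdef
      have hNle : N ≤ Lspan ℝ S 1 :=
        sup_le (Submodule.span_le.mpr (Set.singleton_subset_iff.mpr hone))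
          (Submodule.span_le.mpr (Set.singleton_subset_iff.mpr ha₀L))
      have hlt : Submodule.span ℝ {(1:A)} < N := by
        refine lt_of_le_of_ne le_sup_left (fun he => ha₀ ?_)
        rw [he]
        exact Submodule.mem_sup_right (Submodule.mem_span_singleton_self a₀)
      have hf1 : Module.finrank ℝ (Submodule.span ℝ {(1:A)}) = 1 :=
        finrank_span_singleton one_ne_zero
      have hfN : 2 ≤ Module.finrank ℝ N := by
        have := Submodule.finrank_lt_finrank_of_lt hlt
        omega
      have hNL : N = Lspan ℝ S 1 := by
        refine Submodule.eq_of_le_of_finrank_le hNle ?_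
        omega
      have ha₀sq : a₀ * a₀ ∈ Lspan ℝ S 1 := by
        obtain ⟨u, v, huv⟩ := hquad a₀
        rw [huv]
        exact add_mem (Submodule.smul_mem _ _ hone) (Submodule.smul_mem _ _ ha₀L)
      have key : ∀ b ∈ Lspan ℝ S 1, a₀ * b ∈ Lspan ℝ S 1 := by
        intro b hb
        rw [← hNL] at hb
        obtain ⟨y, hy, z, hz, rfl⟩ := Submodule.mem_sup.mp hb
        obtain ⟨r, rfl⟩ := Submodule.mem_span_singleton.mp hy
        obtain ⟨c, rfl⟩ := Submodule.mem_span_singleton.mp hz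
        rw [mul_add, mul_smul_comm, mul_one, mul_smul_comm]
        exact add_mem (Submodule.smul_mem _ _ ha₀L) (Submodule.smul_mem _ _ ha₀sq)
      intro a ha b hb
      rw [← hNL] at ha
      obtain ⟨y, hy, z, hz, rfl⟩ := Submodule.mem_sup.mp ha
      obtain ⟨r, rfl⟩ := Submodule.mem_span_singleton.mp hy
      obtain ⟨c, rfl⟩ := Submodule.mem_span_singleton.mp hz
      rw [add_mul, smul_mul_assoc, one_mul, smul_mul_assoc]
      exact add_mem (Submodule.smul_mem _ _ hb) (Submodule.smul_mem _ _ (key b hb))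
  have hwords : ∀ m (w : A), IsWord S m w → w ∈ Lspan ℝ S 1 := by
    intro m
    induction m using Nat.strong_induction_on with
    | _ m ih =>
      intro w hw
      rcases lt_or_ge m 2 with hm | hm
      · exact word_mem_lspan hw (by omega)
      · obtain ⟨i, j, u, v, hi, hj, hij, hu, hv, rfl⟩ := isWord_decomp hw hm
        exact hmul u (ih i (by omega) u hu) v (ih j (by omega) v hv)
  have htop : (⊤ : Submodule ℝ A) ≤ Lspan ℝ S 1 := by
    rw [← hgen]
    refine iSup_le fun k => ?_
    rw [Lspan, Submodule.span_le]
    rintro w ⟨m, _, hw⟩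
    exact hwords m w hw
  have hL1top : Lspan ℝ S 1 = ⊤ := top_le_iff.mp htop
  rw [hL1top, finrank_top] at hcon
  omega

lemma growth [FiniteDimensional ℝ A]
    (hquad : ∀ a : A, ∃ u v : ℝ, a * a = u • (1:A) + v • a)
    (hgen : (⨆ k, Lspan ℝ S k) = ⊤)
    {p q s : ℕ} (hp : 1 ≤ p) (hpq : p ≤ q)
    (hdp : s + 1 ≤ Module.finrank ℝ (Lspan ℝ S p))
    (hdq : s + 2 ≤ Module.finrank ℝ (Lspan ℝ S q))
    (hs : s + 2 < Module.finrank ℝ A) :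
    s + 3 ≤ Module.finrank ℝ (Lspan ℝ S (p + q)) := by
  by_contra hcon
  push_neg at hcon
  have hmono : ∀ {r r' : ℕ}, r ≤ r' →
      Module.finrank ℝ (Lspan ℝ S r) ≤ Module.finrank ℝ (Lspan ℝ S r') :=
    fun h => Submodule.finrank_mono (lspan_mono h)
  have hdq' : Module.finrank ℝ (Lspan ℝ S q) = s + 2 := by
    have := hmono (show q ≤ p + q by omega)
    omega
  have hqpq : Lspan ℝ S q = Lspan ℝ S (p + q) := by
    refine Submodule.eq_of_le_of_finrank_le (lspan_mono (by omega)) (by omega)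
  set T := {m : ℕ | ∃ w : A, IsWord S m w ∧ w ∉ Lspan ℝ S q} with hT
  have hTne : T.Nonempty := by
    by_contra hTe
    rw [Set.not_nonempty_iff_eq_empty] at hTe
    have hall : ∀ m (w : A), IsWord S m w → w ∈ Lspan ℝ S q := by
      intro m w hw
      by_contra hnw
      exact absurd (show m ∈ T from ⟨w, hw, hnw⟩) (by simp [hTe])
    have htop : (⊤ : Submodule ℝ A) ≤ Lspan ℝ S q := by
      rw [← hgen]
      refine iSup_le fun k => ?_
      rw [Lspan, Submodule.span_le]
      rintro w ⟨m, _, hw⟩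
      exact hall m w hw
    have h1 : Module.finrank ℝ (⊤ : Submodule ℝ A) ≤ Module.finrank ℝ (Lspan ℝ S q) :=
      Submodule.finrank_mono htop
    rw [finrank_top] at h1
    omega
  set k := sInf T with hk
  obtain ⟨w, hw, hwq⟩ := Nat.sInf_mem hTne
  have hlow : ∀ m, m < k → ∀ w' : A, IsWord S m w' → w' ∈ Lspan ℝ S q := by
    intro m hm w' hw'
    by_contra hnw
    exact absurd (Nat.sInf_le (show m ∈ T from ⟨w', hw', hnw⟩)) (by omega)
  have hkgt : p + q < k := by
    by_contra hle
    push_neg at hle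
    have hmem : w ∈ Lspan ℝ S (p + q) := word_mem_lspan hw hle
    rw [← hqpq] at hmem
    exact hwq hmem
  have hk1 : Lspan ℝ S (k - 1) ≤ Lspan ℝ S q := by
    rw [Lspan, Submodule.span_le]
    rintro w' ⟨m, hm, hw'⟩
    exact hlow m (by omega) w' hw'
  obtain ⟨i, j, u, v, hi, hj, hij, hu, hv, rfl⟩ := isWord_decomp hw (by omega)
  have hu0 : u ∈ Lspan ℝ S (min i q) := by
    rcases le_total i q with h | h
    · rw [min_eq_left h]; exact word_mem_lspan hu le_rfl
    · rw [min_eq_right h]; exact hlow i (by omega) u hu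
  have hv0 : v ∈ Lspan ℝ S (min j q) := by
    rcases le_total j q with h | h
    · rw [min_eq_left h]; exact word_mem_lspan hv le_rfl
    · rw [min_eq_right h]; exact hlow j (by omega) v hv
  have hfin : u * v ∈ Lspan ℝ S q := by
    refine mul_span_le (fun m m' a b hm hm' ha hb => ?_) hu0 hv0
    have hmi : m ≤ i := le_trans hm (min_le_left _ _)
    have hmq : m ≤ q := le_trans hm (min_le_right _ _)
    have hm'j : m' ≤ j := le_trans hm' (min_le_left _ _)
    have hm'q : m' ≤ q := le_trans hm' (min_le_right _ _)
    rcases Nat.eq_zero_or_pos m with rfl | hmpos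
    · rw [isWord_zero ha, one_mul]
      exact word_mem_lspan hb hm'q
    rcases Nat.eq_zero_or_pos m' with rfl | hm'pos
    · rw [isWord_zero hb, mul_one]
      exact word_mem_lspan ha hmq
    rcases lt_or_ge (m + m') k with hlt | hge
    · exact hlow (m + m') hlt _ (IsWord.mul hmpos hm'pos ha hb)
    have hmm' : m + m' = k := by omega
    by_cases hfa : a ∈ Lspan ℝ S (m - 1)
    · have h1 : a * b ∈ Lspan ℝ S ((m - 1) + m') := mul_mem_lspan hfa (word_mem_lspan hb le_rfl)
      exact hk1 (lspan_mono (by omega) h1)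
    by_cases hfb : b ∈ Lspan ℝ S (m' - 1)
    · have h1 : a * b ∈ Lspan ℝ S (m + (m' - 1)) :=
        mul_mem_lspan (word_mem_lspan ha le_rfl) hfb
      exact hk1 (lspan_mono (by omega) h1)
    have hda : Module.finrank ℝ (Lspan ℝ S (m - 1)) < Module.finrank ℝ (Lspan ℝ S m) := by
      refine Submodule.finrank_lt_finrank_of_lt
        (lt_of_le_of_ne (lspan_mono (by omega)) (fun he => hfa ?_))
      rw [he]; exact word_mem_lspan ha le_rfl
    have hdb : Module.finrank ℝ (Lspan ℝ S (m' - 1)) < Module.finrank ℝ (Lspan ℝ S m') := by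
      refine Submodule.finrank_lt_finrank_of_lt
        (lt_of_le_of_ne (lspan_mono (by omega)) (fun he => hfb ?_))
      rw [he]; exact word_mem_lspan hb le_rfl
    rcases lt_trichotomy m m' with hlt | heq | hgt
    · exfalso
      have h1 : Module.finrank ℝ (Lspan ℝ S m) ≤ Module.finrank ℝ (Lspan ℝ S (m' - 1)) :=
        hmono (by omega)
      have h2 : Module.finrank ℝ (Lspan ℝ S m') ≤ s + 2 := by
        have := hmono hm'q; omega
      have h3 : m - 1 < p := by
        by_contra hc; push_neg at hc
        have := hmono hc
        omega
      omega
    · subst heq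
      rcases lt_or_ge (Module.finrank ℝ (Lspan ℝ S m))
        (Module.finrank ℝ (Lspan ℝ S (m - 1)) + 2) with hmul1 | hmul2
      · have hN : Lspan ℝ S (m - 1) ⊔ Submodule.span ℝ {a} = Lspan ℝ S m := by
          refine Submodule.eq_of_le_of_finrank_le
            (sup_le (lspan_mono (by omega))
              (Submodule.span_le.mpr (Set.singleton_subset_iff.mpr (word_mem_lspan ha le_rfl)))) ?_
          have hlt2 : Lspan ℝ S (m - 1) < Lspan ℝ S (m - 1) ⊔ Submodule.span ℝ {a} := by
            refine lt_of_le_of_ne le_sup_left (fun he => hfa ?_)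
            rw [he]
            exact Submodule.mem_sup_right (Submodule.mem_span_singleton_self a)
          have := Submodule.finrank_lt_finrank_of_lt hlt2
          omega
        have hbN : b ∈ Lspan ℝ S (m - 1) ⊔ Submodule.span ℝ {a} := by
          rw [hN]; exact word_mem_lspan hb le_rfl
        obtain ⟨z, hz, y, hy, rfl⟩ := Submodule.mem_sup.mp hbN
        obtain ⟨c, rfl⟩ := Submodule.mem_span_singleton.mp hy
        rw [mul_add, mul_smul_comm]
        refine add_mem ?_ (Submodule.smul_mem _ _ ?_)
        · exact hk1 (lspan_mono (show m + (m - 1) ≤ k - 1 by omega)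
            (mul_mem_lspan (word_mem_lspan ha le_rfl) hz))
        · obtain ⟨uu, vv, huv⟩ := hquad a
          rw [huv]
          exact add_mem (Submodule.smul_mem _ _ (one_mem_lspan q))
            (Submodule.smul_mem _ _ (word_mem_lspan ha hmq))
      · exfalso
        have h2 : Module.finrank ℝ (Lspan ℝ S m) ≤ s + 2 := by
          have := hmono hmq; omega
        have h3 : m - 1 < p := by
          by_contra hc; push_neg at hc
          have := hmono hc
          omega
        omega
    · exfalso
      have h1 : Module.finrank ℝ (Lspan ℝ S m') ≤ Module.finrank ℝ (Lspan ℝ S (m - 1)) :=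
        hmono (by omega)
      have h2 : Module.finrank ℝ (Lspan ℝ S m) ≤ s + 2 := by
        have := hmono hmq; omega
      have h3 : m' - 1 < p := by
        by_contra hc; push_neg at hc
        have := hmono hc
        omega
      omega
  exact hwq hfin

lemma key_chain [FiniteDimensional ℝ A]
    (hquad : ∀ a : A, ∃ u v : ℝ, a * a = u • (1:A) + v • a)
    (hgen : (⨆ k, Lspan ℝ S k) = ⊤) (hn : 2 < Module.finrank ℝ A) :
    ∀ t, 1 ≤ t → t + 1 ≤ Module.finrank ℝ A →
      t + 1 ≤ Module.finrank ℝ (Lspan ℝ S (Nat.fib t)) := by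
  have hd1 : 3 ≤ Module.finrank ℝ (Lspan ℝ S 1) := dim_L1 hquad hgen hn
  intro t
  induction t using Nat.strong_induction_on with
  | _ t ih =>
    intro ht htn
    rcases t with _ | (_ | (_ | u))
    · omega
    · rw [Nat.fib_one]
      omega
    · rw [Nat.fib_two]
      omega
    · have h1 := ih (u + 1) (by omega) (by omega) (by omega)
      have h2 := ih (u + 2) (by omega) (by omega) (by omega)
      have hfib : Nat.fib (u + 3) = Nat.fib (u + 1) + Nat.fib (u + 2) := Nat.fib_add_two
      rw [hfib]
      have hg := growth (S := S) hquad hgen (p := Nat.fib (u + 1)) (q := Nat.fib (u + 2))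
        (s := u + 1) (Nat.fib_pos.mpr (by omega)) (Nat.fib_mono (by omega)) h1 h2 (by omega)
      omega

end Dev

/-- A locally-complex algebra: a finite-dimensional unital real (not necessarily associative)
algebra that is quadratic (every `a` satisfies `a² = u•1 + v•a`) and has no nontrivial
idempotents and no nonzero square-zero elements. -/
def LocallyComplex (A : Type*) [NonAssocRing A] [Module ℝ A] [SMulCommClass ℝ A A]
    [IsScalarTower ℝ A A] : Prop :=
  FiniteDimensional ℝ A ∧
  (∀ a : A, ∃ u v : ℝ, a * a = u • (1 : A) + v • a) ∧
  (∀ a : A, a * a = a → a = 0 ∨ a = 1) ∧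
  (∀ a : A, a * a = 0 → a = 0)

theorem stmt_17 (A : Type*) [NonAssocRing A] [Module ℝ A]
    [SMulCommClass ℝ A A] [IsScalarTower ℝ A A] (hA : LocallyComplex A)
    (n : ℕ) (hdim : Module.finrank ℝ A = n) (hn : 2 < n) :
    algLen ℝ A ≤ Nat.fib (n - 1) := by
  obtain ⟨hfd, hquad, -, -⟩ := hA
  haveI := hfd
  have hbound : ∀ l ∈ {l | ∃ S : Set A, S.Finite ∧ Generates ℝ S ∧ len ℝ S = l},
      l ≤ Nat.fib (n - 1) := by
    rintro l ⟨S, -, hgen, rfl⟩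
    have hgen' : (⨆ k, Lspan ℝ S k) = ⊤ := hgen
    have hn' : 2 < Module.finrank ℝ A := by omega
    have hc := key_chain hquad hgen' hn' (n - 1) (by omega) (by omega)
    have htop : Lspan ℝ S (Nat.fib (n - 1)) = ⊤ := by
      apply Submodule.eq_top_of_finrank_eq
      have hle := Submodule.finrank_le (Lspan ℝ S (Nat.fib (n - 1)))
      omega
    exact Nat.sInf_le htop
  rcases Set.eq_empty_or_nonempty
    {l | ∃ S : Set A, S.Finite ∧ Generates ℝ S ∧ len ℝ S = l} with he | hne
  · unfold algLen
    rw [he, csSup_empty]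
    exact Nat.zero_le _
  · exact csSup_le hne hbound
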